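/- (Serfling's bound for sampling without replacement) Let x₁, …, x_n be a list of values in [a, b] with a < b, and let x̄ = (1/n) Σᵢ xᵢ. Draw k of these values X₁, …, X_k uniformly at random without replacement (0 < k ≤ n) and set X = (1/k) Σᵢ Xᵢ. Then for any δ > 0, Pr[X − x̄ ≥ δ] ≤ exp(−2 δ² k n / ((n − k + 1)(b − a)²)). -/

import Mathlib

/-!
Serfling's argument. Write `N = n`, `μ` for the population mean and `S_j` for the sum of the
first `j` draws. Then `Z_j = (S_j - j μ) / (N - j)` is a martingale: its increment at step `j + 1`
is `(X_{j+1} - m_j) / (N - j - 1)`, where `m_j` is the mean of the values not drawn yet, so given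
the first `j` draws it is a centred variable with range `(b - a) / (N - j - 1)`. Hoeffding's
lemma bounds its conditional moment generating function, and multiplying these bounds shows that
`Z_k` is sub-Gaussian with variance proxy `(b - a)² / 4 · ∑_{i<k} 1 / (N - i - 1)²`. Comparing
with a telescoping sum, `∑_{i<k} 1 / (N - i - 1)² ≤ k (N - k + 1) / (N (N - k)²)`, and the
Chernoff bound for the event `Z_k ≥ k δ / (N - k)`, which is `S_k / k - μ ≥ δ`, gives the
claimed inequality.
-/

open scoped Classical

open Real Finset ProbabilityTheory MeasureTheory

theorem sum_exp_mul_sub_mean_le {α : Type*} [Fintype α] {y : α → ℝ} {a b : ℝ}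
    (hy : ∀ i, y i ∈ Set.Icc a b) (s : ℝ) :
    ∑ i, exp (s * (y i - (∑ j, y j) / Fintype.card α)) ≤
      Fintype.card α * exp ((b - a) ^ 2 / 4 * s ^ 2 / 2) := by
  cases isEmpty_or_nonempty α
  · simp
  let _ : MeasurableSpace α := ⊤
  have hoeffding := (hasSubgaussianMGF_of_mem_Icc (μ := (PMF.uniformOfFintype α).toMeasure)
    (measurable_of_countable y).aemeasurable (ae_of_all _ hy)).mgf_le s
  have hcard : (0 : ℝ) < Fintype.card α := by exact_mod_cast Fintype.card_pos
  simp only [mgf, PMF.integral_eq_sum, PMF.uniformOfFintype_apply, smul_eq_mul,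
    ENNReal.toReal_inv, ENNReal.toReal_natCast, inv_mul_eq_div, ← sum_div] at hoeffding
  rw [div_le_iff₀' hcard] at hoeffding
  have hv : (((‖b - a‖₊ / 2) ^ 2 : NNReal) : ℝ) = (b - a) ^ 2 / 4 := by
    push_cast
    rw [Real.norm_eq_abs, div_pow, sq_abs]
    norm_num
  rwa [hv] at hoeffding

theorem card_filter_ge_div_card_le_of_sum_exp_le {α : Type*} [Fintype α] (Z : α → ℝ)
    {v c : ℝ} (hv : 0 < v) (hc : 0 ≤ c)
    (hZ : ∀ t, ∑ a, exp (t * Z a) ≤ Fintype.card α * exp (v * t ^ 2 / 2)) :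
    (#{a | c ≤ Z a} : ℝ) / Fintype.card α ≤ exp (-c ^ 2 / (2 * v)) := by
  rcases (Fintype.card α).eq_zero_or_pos with hα | hα
  · simp [hα, (exp_pos _).le]
  set t := c / v with ht_def
  have ht : 0 ≤ t := div_nonneg hc hv.le
  rw [div_le_iff₀ (by exact_mod_cast hα)]
  have markov : #{a | c ≤ Z a} * exp (t * c) ≤ ∑ a, exp (t * Z a) :=
    calc #{a | c ≤ Z a} * exp (t * c) = ∑ a ∈ {a | c ≤ Z a}, exp (t * c) := by
          rw [sum_const, nsmul_eq_mul]
      _ ≤ ∑ a ∈ {a | c ≤ Z a}, exp (t * Z a) :=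
          sum_le_sum fun a ha => exp_le_exp.2 (mul_le_mul_of_nonneg_left (mem_filter.1 ha).2 ht)
      _ ≤ ∑ a, exp (t * Z a) :=
          sum_le_sum_of_subset_of_nonneg (filter_subset _ _) fun _ _ _ => (exp_pos _).le
  have hexp : exp (-c ^ 2 / (2 * v)) * exp (t * c) = exp (v * t ^ 2 / 2) := by
    rw [← exp_add]
    congr 1
    rw [ht_def]
    field_simp
    ring
  rw [← mul_le_mul_iff_of_pos_right (exp_pos (t * c))]
  calc #{a | c ≤ Z a} * exp (t * c) ≤ Fintype.card α * exp (v * t ^ 2 / 2) :=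
        markov.trans (hZ t)
    _ = exp (-c ^ 2 / (2 * v)) * Fintype.card α * exp (t * c) := by rw [← hexp]; ring

theorem sum_range_one_div_sub_sq_le {N : ℝ} {k : ℕ} (hk : (k : ℝ) < N) :
    ∑ i ∈ range k, 1 / (N - (i + 1)) ^ 2 ≤ k * (N - k + 1) / (N * (N - k) ^ 2) := by
  have hm : 0 < N - k := by linarith
  have hterm : ∀ i ∈ range k, 1 / (N - (i + 1)) ^ 2 ≤
      (N - k + 1) / (N - k) * (1 / (N - (i + 1 : ℕ)) - 1 / (N - i)) := by
    intro i hi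
    have hi : (i : ℝ) + 1 ≤ k := by exact_mod_cast mem_range.1 hi
    have hu : N - k ≤ N - (i + 1) := by linarith
    have hu' : 0 < N - (i + 1) := by linarith
    push_cast
    rw [div_sub_div _ _ hu'.ne' (by linarith), div_mul_div_comm,
      div_le_div_iff₀ (pow_pos hu' 2) (mul_pos hm (mul_pos hu' (by linarith)))]
    nlinarith
  calc ∑ i ∈ range k, 1 / (N - (i + 1)) ^ 2
      ≤ ∑ i ∈ range k, (N - k + 1) / (N - k) * (1 / (N - (i + 1 : ℕ)) - 1 / (N - i)) :=
        sum_le_sum hterm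
    _ = (N - k + 1) / (N - k) * (1 / (N - k) - 1 / N) := by
        rw [← mul_sum, sum_range_sub (fun i => 1 / (N - i))]
        simp
    _ = k * (N - k + 1) / (N * (N - k) ^ 2) := by
        have : N ≠ 0 := by linarith [(Nat.cast_nonneg k : (0 : ℝ) ≤ k)]
        field_simp
        ring

section Sampling

variable {ι : Type*} [Fintype ι]

theorem Fintype.sum_embedding_fin_succ {M : Type*} [AddCommMonoid M] (j : ℕ)
    (F : (Fin (j + 1) ↪ ι) → M) :
    ∑ e, F e = ∑ e : Fin j ↪ ι, ∑ i : {i // i ∉ Set.range e},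
      F ((Equiv.embeddingFinSucc j ι).symm ⟨e, i⟩) := by
  rw [← (Equiv.embeddingFinSucc j ι).symm.sum_comp, Fintype.sum_sigma]

theorem Fintype.card_compl_range_embedding {j : ℕ} (e : Fin j ↪ ι) :
    Fintype.card {i // i ∉ Set.range e} = Fintype.card ι - j := by
  rw [Fintype.card_subtype_compl]
  congr 1
  exact (Fintype.card_congr (Equiv.ofInjective e e.injective).symm).trans (Fintype.card_fin j)

theorem Fintype.sum_compl_range_embedding {M : Type*} [AddCommGroup M] {j : ℕ} (e : Fin j ↪ ι)
    (x : ι → M) : ∑ l : {l // l ∉ Set.range e}, x l = ∑ l, x l - ∑ i, x (e i) := by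
  have hrange : ∑ i, x (e i) = ∑ l : {l // l ∈ Set.range e}, x l :=
    (Equiv.ofInjective e e.injective).sum_comp (fun l => x l)
  rw [hrange, eq_sub_iff_add_eq']
  convert Fintype.sum_subtype_add_sum_subtype (· ∈ Set.range e) x

theorem Fintype.card_embedding_fin_succ (j : ℕ) :
    Fintype.card (Fin (j + 1) ↪ ι) = (Fintype.card ι - j) * Fintype.card (Fin j ↪ ι) := by
  simp only [Fintype.card_embedding_eq, Fintype.card_fin, Nat.descFactorial_succ]

noncomputable def serflingMartingale (x : ι → ℝ) {j : ℕ} (e : Fin j ↪ ι) : ℝ :=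
  (∑ i, x (e i) - j * ((∑ l, x l) / Fintype.card ι)) / (Fintype.card ι - j)

theorem serflingMartingale_embeddingFinSucc_symm (x : ι → ℝ) {j : ℕ}
    (hj : j + 1 < Fintype.card ι) (e : Fin j ↪ ι) (i : {i // i ∉ Set.range e}) :
    serflingMartingale x ((Equiv.embeddingFinSucc j ι).symm ⟨e, i⟩) =
      serflingMartingale x e + (x i - (∑ l : {l // l ∉ Set.range e}, x l) /
        Fintype.card {l // l ∉ Set.range e}) / (Fintype.card ι - (j + 1)) := by
  have hN : (j : ℝ) + 1 < Fintype.card ι := by exact_mod_cast hj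
  have h1 : (Fintype.card ι : ℝ) - j ≠ 0 := by linarith
  have h2 : (Fintype.card ι : ℝ) - (j + 1) ≠ 0 := by linarith
  have h3 : (Fintype.card ι : ℝ) ≠ 0 := by linarith
  rw [Fintype.sum_compl_range_embedding, Fintype.card_compl_range_embedding,
    Nat.cast_sub (by omega)]
  simp only [serflingMartingale, Equiv.coe_embeddingFinSucc_symm, Fin.sum_univ_succ,
    Fin.cons_zero, Fin.cons_succ]
  push_cast
  field_simp
  ring

theorem sum_exp_serflingMartingale_embeddingFinSucc_symm_le {x : ι → ℝ} {a b : ℝ}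
    (hx : ∀ i, x i ∈ Set.Icc a b) (t : ℝ) {j : ℕ} (hj : j + 1 < Fintype.card ι)
    (e : Fin j ↪ ι) :
    ∑ i : {i // i ∉ Set.range e},
        exp (t * serflingMartingale x ((Equiv.embeddingFinSucc j ι).symm ⟨e, i⟩)) ≤
      (Fintype.card ι - j) * exp ((b - a) ^ 2 / 4 * (1 / (Fintype.card ι - (j + 1) : ℝ) ^ 2) *
        t ^ 2 / 2) * exp (t * serflingMartingale x e) := by
  calc ∑ i, exp (t * serflingMartingale x ((Equiv.embeddingFinSucc j ι).symm ⟨e, i⟩))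
      = exp (t * serflingMartingale x e) * ∑ i : {i // i ∉ Set.range e},
          exp (t / (Fintype.card ι - (j + 1)) * (x i - (∑ l : {l // l ∉ Set.range e}, x l) /
            Fintype.card {l // l ∉ Set.range e})) := by
        simp only [serflingMartingale_embeddingFinSucc_symm x hj, mul_add, exp_add, mul_sum,
          div_mul_eq_mul_div, mul_div_assoc]
    _ ≤ exp (t * serflingMartingale x e) * (Fintype.card {l // l ∉ Set.range e} *
          exp ((b - a) ^ 2 / 4 * (t / (Fintype.card ι - (j + 1))) ^ 2 / 2)) := by
        gcongr
        exact sum_exp_mul_sub_mean_le (fun i : {i // i ∉ Set.range e} => hx i) _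
    _ = _ := by
        rw [Fintype.card_compl_range_embedding, Nat.cast_sub (by omega), div_pow]
        ring_nf

theorem sum_exp_serflingMartingale_le {x : ι → ℝ} {a b : ℝ} (hx : ∀ i, x i ∈ Set.Icc a b)
    (t : ℝ) {j : ℕ} (hj : j < Fintype.card ι) :
    ∑ e : Fin j ↪ ι, exp (t * serflingMartingale x e) ≤ Fintype.card (Fin j ↪ ι) *
      exp ((b - a) ^ 2 / 4 * (∑ i ∈ range j, 1 / (Fintype.card ι - (i + 1) : ℝ) ^ 2) *
        t ^ 2 / 2) := by
  induction j with
  | zero => simp [serflingMartingale]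
  | succ j ih =>
    have hjN : (j : ℝ) < Fintype.card ι := by exact_mod_cast (Nat.lt_succ_self j).trans hj
    set v : ℝ := (b - a) ^ 2 / 4 * (1 / (Fintype.card ι - (j + 1) : ℝ) ^ 2)
    calc ∑ e : Fin (j + 1) ↪ ι, exp (t * serflingMartingale x e)
        = ∑ e : Fin j ↪ ι, ∑ i : {i // i ∉ Set.range e},
            exp (t * serflingMartingale x ((Equiv.embeddingFinSucc j ι).symm ⟨e, i⟩)) :=
          Fintype.sum_embedding_fin_succ j _
      _ ≤ ∑ e : Fin j ↪ ι, (Fintype.card ι - j) * exp (v * t ^ 2 / 2) *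
            exp (t * serflingMartingale x e) :=
          sum_le_sum fun e _ => sum_exp_serflingMartingale_embeddingFinSucc_symm_le hx t hj e
      _ ≤ (Fintype.card ι - j) * exp (v * t ^ 2 / 2) * (Fintype.card (Fin j ↪ ι) *
            exp ((b - a) ^ 2 / 4 * (∑ i ∈ range j, 1 / (Fintype.card ι - (i + 1) : ℝ) ^ 2) *
              t ^ 2 / 2)) := by
          rw [← mul_sum]
          gcongr
          exact ih (by omega)
      _ = _ := by
          rw [Fintype.card_embedding_fin_succ, sum_range_succ, Nat.cast_mul,
            Nat.cast_sub (by omega), mul_add, add_mul, add_div, exp_add]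
          ring

theorem le_serflingMartingale_of_le_sub_mean {x : ι → ℝ} {k : ℕ} (hk : 0 < k)
    (hkN : k < Fintype.card ι) (e : Fin k ↪ ι) {δ : ℝ}
    (hδ : δ ≤ (1 / k) * ∑ i, x (e i) - (1 / Fintype.card ι) * ∑ l, x l) :
    k * δ / (Fintype.card ι - k) ≤ serflingMartingale x e := by
  have hkN' : (k : ℝ) < Fintype.card ι := by exact_mod_cast hkN
  have hk' : (0 : ℝ) < k := by exact_mod_cast hk
  rw [serflingMartingale]
  gcongr
  calc k * δ ≤ k * ((1 / k) * ∑ i, x (e i) - (1 / Fintype.card ι) * ∑ l, x l) := by gcongr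
    _ = _ := by field_simp

theorem card_filter_le_serflingMartingale_div_card_le {x : ι → ℝ} {a b : ℝ} (hab : a < b)
    (hx : ∀ i, x i ∈ Set.Icc a b) {k : ℕ} (hk : 0 < k) (hkN : k < Fintype.card ι) {δ : ℝ}
    (hδ : 0 ≤ δ) :
    (#{e : Fin k ↪ ι | k * δ / (Fintype.card ι - k) ≤ serflingMartingale x e} : ℝ) /
        Fintype.card (Fin k ↪ ι) ≤
      exp (-2 * δ ^ 2 * k * Fintype.card ι / ((Fintype.card ι - k + 1) * (b - a) ^ 2)) := by
  have hkN' : (k : ℝ) < Fintype.card ι := by exact_mod_cast hkN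
  set N : ℝ := (Fintype.card ι : ℝ)
  set σ := ∑ i ∈ range k, 1 / (N - (i + 1)) ^ 2
  have hσ : 0 < σ := by
    refine sum_pos (fun i hi => ?_) ⟨0, mem_range.2 hk⟩
    have : (i : ℝ) + 1 ≤ k := by exact_mod_cast mem_range.1 hi
    exact one_div_pos.2 (pow_pos (by linarith) 2)
  calc _ ≤ exp (-(k * δ / (N - k)) ^ 2 / (2 * ((b - a) ^ 2 / 4 * σ))) :=
        card_filter_ge_div_card_le_of_sum_exp_le _ (by positivity) (by positivity)
          fun t => sum_exp_serflingMartingale_le hx t hkN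
    _ ≤ exp (-(k * δ / (N - k)) ^ 2 /
          (2 * ((b - a) ^ 2 / 4 * (k * (N - k + 1) / (N * (N - k) ^ 2))))) := by
        rw [neg_div, neg_div, exp_le_exp, neg_le_neg_iff]
        gcongr
        exact sum_range_one_div_sub_sq_le hkN'
    _ = _ := by
        have : N - k ≠ 0 := by linarith
        have : N - k + 1 ≠ 0 := by linarith
        have : b - a ≠ 0 := by linarith
        congr 1
        field_simp
        ring

end Sampling

theorem stmt_11 (n k : ℕ) (hk : 0 < k) (hkn : k ≤ n)
    (a b : ℝ) (hab : a < b) (x : Fin n → ℝ) (hx : ∀ i, x i ∈ Set.Icc a b)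
    (δ : ℝ) (hδ : 0 < δ) :
    ((Finset.univ.filter
        (fun f : {f : Fin k → Fin n // Function.Injective f} =>
          (1 / k) * ∑ i, x (f.1 i) - (1 / n) * ∑ j, x j ≥ δ)).card : ℝ) /
      ((Finset.univ : Finset {f : Fin k → Fin n // Function.Injective f}).card : ℝ)
      ≤ Real.exp (-2 * δ ^ 2 * k * n / ((n - k + 1) * (b - a) ^ 2)) := by
  obtain hlt | rfl := hkn.lt_or_eq
  · have hkN : k < Fintype.card (Fin n) := by rwa [Fintype.card_fin]
    set e := Equiv.subtypeInjectiveEquivEmbedding (Fin k) (Fin n)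
    have hevent : univ.filter (fun f : {f : Fin k → Fin n // Function.Injective f} =>
          (1 / k) * ∑ i, x (f.1 i) - (1 / n) * ∑ j, x j ≥ δ) ⊆
        univ.filter fun f => k * δ / (n - k) ≤ serflingMartingale x (e f) :=
      monotone_filter_right _ fun f _ hf => by
        simpa only [Fintype.card_fin] using
          le_serflingMartingale_of_le_sub_mean hk hkN (e f) (by rwa [Fintype.card_fin])
    calc _ ≤ (#{f | k * δ / (n - k) ≤ serflingMartingale x (e f)} : ℝ) / #univ := by
          gcongr ?_ / _
          exact_mod_cast card_le_card hevent
      _ = (#{e | k * δ / (n - k) ≤ serflingMartingale x e} : ℝ) /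
            Fintype.card (Fin k ↪ Fin n) := by
          rw [card_univ, Fintype.card_congr e]
          congr 2
          exact card_equiv e (by simp)
      _ ≤ _ := by
          simpa only [Fintype.card_fin] using
            card_filter_le_serflingMartingale_div_card_le hab hx hk hkN hδ.le
  · have hsum : ∀ f : {f : Fin k → Fin k // Function.Injective f},
        ∑ i, x (f.1 i) = ∑ j, x j :=
      fun f => Fintype.sum_bijective f.1 (Finite.injective_iff_bijective.1 f.2) _ _ fun _ => rfl
    simp [hsum, hδ.not_ge, (exp_pos _).le]
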